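/- arXiv:1009.1732 — 3 statements merged into one kernel-verified Lean document; each statement's English description precedes it below -/
import Mathlib

section
/- The almost-sure limit Θ of the black-ball proportion Z_t of a Pólya urn is distributed according to the Beta(b₀/s, w₀/s) law, i.e. the law of Θ on [0,1] has density θ^{b₀/s - 1}(1-θ)^{w₀/s - 1}/B(b₀/s, w₀/s) with respect to Lebesgue measure. -/
open Finset MeasureTheory ProbabilityTheory

/-- White weight of the Pólya urn after the draws `x 0, …, x (t-1)`
(`x i = true` means the `i`-th draw was black). -/
noncomputable def polyaW (w0 s : ℝ) (x : ℕ → Bool) : ℕ → ℝ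
  | 0 => w0
  | t + 1 => polyaW w0 s x t + if x t then 0 else s

/-- Black weight of the Pólya urn after the draws `x 0, …, x (t-1)`. -/
noncomputable def polyaB (b0 s : ℝ) (x : ℕ → Bool) : ℕ → ℝ
  | 0 => b0
  | t + 1 => polyaB b0 s x t + if x t then s else 0

/-- Joint probability that the first `n` draws of the Pólya urn are
`x 0, …, x (n-1)`. -/
noncomputable def polyaJoint (w0 b0 s : ℝ) (x : ℕ → Bool) (n : ℕ) : ℝ :=
  ∏ t ∈ range n,
    (if x t then polyaB b0 s x t else polyaW w0 s x t) /
      (polyaW w0 s x t + polyaB b0 s x t)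


/-- The Beta function `B(a,b) = Γ(a)Γ(b)/Γ(a+b)`. -/
noncomputable def betaFn (a b : ℝ) : ℝ :=
  Real.Gamma a * Real.Gamma b / Real.Gamma (a + b)

/-- The Beta(a,b) probability measure on `[0,1]`, given by the density
`θ^(a-1) (1-θ)^(b-1) / B(a,b)` with respect to Lebesgue measure. -/
noncomputable def betaMeasure (a b : ℝ) : Measure ℝ :=
  (volume.restrict (Set.Ioo (0 : ℝ) 1)).withDensity
    fun θ => ENNReal.ofReal (θ ^ (a - 1) * (1 - θ) ^ (b - 1) / betaFn a b)

/-!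
The `k`-th moment of `Beta(B/s, W/s)`, evaluated at the urn state `(W_t, B_t)`, is a bounded
martingale: averaging its values at `(W, B + s)` and `(W + s, B)` with weights `B/(W+B)` and
`W/(W+B)` gives back its value at `(W, B)`, which is the recursion `B(a+1, b) + B(a, b+1) = B(a, b)`
of the Beta function. Its expectation is therefore the `k`-th moment of `Beta(b₀/s, w₀/s)` at every
time, while `Z_t → Θ` makes it converge to `Θ^k`; by dominated convergence `Θ` has the moments of
`Beta(b₀/s, w₀/s)`. Both laws live on `[0, 1]`, where a law is determined by its moments
(Weierstrass approximation).
-/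

open Set Filter Topology Function

namespace MeasureTheory

variable {μ ν : Measure ℝ} {a b : ℝ}

theorem integrable_of_ae_mem_Icc [IsFiniteMeasure μ] (hμ : ∀ᵐ x ∂μ, x ∈ Icc a b)
    {f : ℝ → ℝ} (hf : Continuous f) : Integrable f μ := by
  rw [← Measure.restrict_eq_self_of_ae_mem hμ]
  exact hf.continuousOn.integrableOn_compact isCompact_Icc

theorem integral_eval_eq_sum_moments [IsFiniteMeasure μ] (hμ : ∀ᵐ x ∂μ, x ∈ Icc a b)
    (p : Polynomial ℝ) :
    ∫ x, p.eval x ∂μ = ∑ i ∈ range (p.natDegree + 1), p.coeff i * ∫ x, x ^ i ∂μ := by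
  simp_rw [Polynomial.eval_eq_sum_range]
  rw [integral_finsetSum _ fun i _ => (integrable_of_ae_mem_Icc hμ (by fun_prop)).const_mul _]
  simp_rw [integral_const_mul]

theorem dist_integral_le_of_ae_mem_Icc [IsProbabilityMeasure μ] (hμ : ∀ᵐ x ∂μ, x ∈ Icc a b)
    {f g : ℝ → ℝ} (hf : Continuous f) (hg : Continuous g) {ε : ℝ}
    (hfg : ∀ x ∈ Icc a b, |f x - g x| ≤ ε) : dist (∫ x, f x ∂μ) (∫ x, g x ∂μ) ≤ ε := by
  rw [dist_eq_norm, ← integral_sub (integrable_of_ae_mem_Icc hμ hf)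
    (integrable_of_ae_mem_Icc hμ hg)]
  simpa using norm_integral_le_of_norm_le_const (μ := μ)
    (hμ.mono fun x hx => (Real.norm_eq_abs _).trans_le (hfg x hx))

theorem Measure.ext_of_moments_of_ae_mem_Icc [IsProbabilityMeasure μ] [IsProbabilityMeasure ν]
    (hμ : ∀ᵐ x ∂μ, x ∈ Icc a b) (hν : ∀ᵐ x ∂ν, x ∈ Icc a b)
    (h : ∀ k : ℕ, ∫ x, x ^ k ∂μ = ∫ x, x ^ k ∂ν) : μ = ν := by
  refine ext_of_forall_integral_eq_of_IsFiniteMeasure fun f => eq_of_forall_dist_le fun ε hε => ?_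
  obtain ⟨p, hp⟩ := exists_polynomial_near_of_continuousOn a b f f.continuous.continuousOn
    (ε / 2) (half_pos hε)
  have hpf : ∀ x ∈ Icc a b, |p.eval x - f x| ≤ ε / 2 := fun x hx => (hp x hx).le
  have hfp : ∀ x ∈ Icc a b, |f x - p.eval x| ≤ ε / 2 := fun x hx => by
    rw [abs_sub_comm]; exact hpf x hx
  have hp_int : ∫ x, p.eval x ∂μ = ∫ x, p.eval x ∂ν := by
    simp only [integral_eval_eq_sum_moments hμ, integral_eval_eq_sum_moments hν, h]
  calc dist (∫ x, f x ∂μ) (∫ x, f x ∂ν)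
      ≤ dist (∫ x, f x ∂μ) (∫ x, p.eval x ∂μ) + dist (∫ x, p.eval x ∂ν) (∫ x, f x ∂ν) := by
        rw [← hp_int]; exact dist_triangle _ _ _
    _ ≤ ε / 2 + ε / 2 := add_le_add
        (dist_integral_le_of_ae_mem_Icc hμ f.continuous p.continuous hfp)
        (dist_integral_le_of_ae_mem_Icc hν p.continuous f.continuous hpf)
    _ = ε := add_halves ε

end MeasureTheory

theorem Filter.Tendsto.add_const_div_add_const {ι : Type*} {l : Filter ι} {u v : ι → ℝ}
    {θ : ℝ} (huv : Tendsto (fun i => u i / v i) l (𝓝 θ)) (hv : Tendsto v l atTop) (c : ℝ) :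
    Tendsto (fun i => (u i + c) / (v i + c)) l (𝓝 θ) := by
  have hc : Tendsto (fun i => c / v i) l (𝓝 0) := tendsto_const_nhds.div_atTop hv
  have hlim := (huv.add hc).div (tendsto_const_nhds.add hc) (by norm_num : (1 : ℝ) + 0 ≠ 0)
  rw [add_zero, add_zero, div_one] at hlim
  refine hlim.congr' ((hv.eventually_gt_atTop 0).mono fun i hi => ?_)
  simp only [Pi.div_apply]
  field_simp

namespace ProbabilityTheory

variable {a b : ℝ}

theorem beta_comm (a b : ℝ) : beta a b = beta b a := by
  rw [beta, beta, mul_comm, add_comm]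

theorem beta_add_one (ha : 0 < a) (hb : 0 < b) : beta (a + 1) b = a / (a + b) * beta a b := by
  have hab : a + b ≠ 0 := (add_pos ha hb).ne'
  simp only [beta, add_right_comm a 1 b, Real.Gamma_add_one ha.ne', Real.Gamma_add_one hab]
  field_simp

theorem beta_add_one_right (ha : 0 < a) (hb : 0 < b) :
    beta a (b + 1) = b / (a + b) * beta a b := by
  rw [beta_comm, beta_add_one hb ha, beta_comm, add_comm b]

theorem beta_add_one_add_beta_add_one (ha : 0 < a) (hb : 0 < b) :
    beta (a + 1) b + beta a (b + 1) = beta a b := by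
  rw [beta_add_one ha hb, beta_add_one_right ha hb, ← add_mul, ← add_div,
    div_self (add_pos ha hb).ne', one_mul]

noncomputable def betaMoment (a b : ℝ) (k : ℕ) : ℝ := ∏ j ∈ range k, (a + j) / (a + b + j)

theorem beta_add_nat (ha : 0 < a) (hb : 0 < b) (k : ℕ) :
    beta (a + k) b = betaMoment a b k * beta a b := by
  induction k with
  | zero => simp [betaMoment]
  | succ k ih =>
    rw [Nat.cast_succ, ← add_assoc, beta_add_one (by positivity) hb, ih, add_right_comm a _ b]
    simp only [betaMoment, prod_range_succ]
    ring

theorem betaMoment_eq_div (ha : 0 < a) (hb : 0 < b) (k : ℕ) :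
    betaMoment a b k = beta (a + k) b / beta a b := by
  rw [beta_add_nat ha hb, mul_div_cancel_right₀ _ (beta_pos ha hb).ne']

theorem betaMoment_add_one_add_betaMoment_add_one (ha : 0 < a) (hb : 0 < b) (k : ℕ) :
    a / (a + b) * betaMoment (a + 1) b k + b / (a + b) * betaMoment a (b + 1) k =
      betaMoment a b k := by
  have hk : 0 < a + k := by positivity
  rw [betaMoment_eq_div (by positivity) hb, betaMoment_eq_div ha (by positivity),
    betaMoment_eq_div ha hb, beta_add_one ha hb, beta_add_one_right ha hb,
    add_right_comm a 1, ← beta_add_one_add_beta_add_one hk hb]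
  have := beta_pos ha hb
  have := add_pos ha hb
  field_simp

theorem betaMoment_nonneg (ha : 0 ≤ a) (hb : 0 ≤ b) (k : ℕ) : 0 ≤ betaMoment a b k :=
  prod_nonneg fun j _ => by positivity

theorem betaMoment_le_one (ha : 0 ≤ a) (hb : 0 ≤ b) (k : ℕ) : betaMoment a b k ≤ 1 :=
  prod_le_one (fun j _ => by positivity) fun j _ => div_le_one_of_le₀ (by linarith) (by positivity)

theorem tendsto_betaMoment {ι : Type*} {l : Filter ι} {a b : ι → ℝ} {θ : ℝ}
    (hθ : Tendsto (fun i => a i / (a i + b i)) l (𝓝 θ))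
    (hab : Tendsto (fun i => a i + b i) l atTop) (k : ℕ) :
    Tendsto (fun i => betaMoment (a i) (b i) k) l (𝓝 (θ ^ k)) := by
  have := tendsto_finsetProd (range k) fun j (_ : j ∈ range k) =>
    hθ.add_const_div_add_const hab (j : ℝ)
  simpa [betaMoment] using this

theorem betaPDFReal_nonneg (ha : 0 < a) (hb : 0 < b) (x : ℝ) : 0 ≤ betaPDFReal a b x := by
  unfold betaPDFReal
  split_ifs with hx
  · exact (betaPDFReal_pos hx.1 hx.2 ha hb).le.trans_eq (if_pos hx)
  · exact le_rfl

theorem integral_betaPDFReal (ha : 0 < a) (hb : 0 < b) : ∫ x, betaPDFReal a b x = 1 := by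
  rw [integral_eq_lintegral_of_nonneg_ae (ae_of_all _ (betaPDFReal_nonneg ha hb))
    (measurable_betaPDFReal a b).aestronglyMeasurable, ← ENNReal.toReal_one,
    ← lintegral_betaPDF_eq_one ha hb]
  rfl

theorem betaPDFReal_mul_pow (ha : 0 < a) (hb : 0 < b) (k : ℕ) (x : ℝ) :
    betaPDFReal a b x * x ^ k = betaMoment a b k * betaPDFReal (a + k) b x := by
  unfold betaPDFReal
  split_ifs with hx
  · have hpow : x ^ (a + k - 1) = x ^ (a - 1) * x ^ k := by
      rw [← Real.rpow_natCast, ← Real.rpow_add hx.1]; ring_nf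
    have hmoment : betaMoment a b k ≠ 0 := by
      rw [betaMoment_eq_div ha hb]
      exact (div_pos (beta_pos (by positivity) hb) (beta_pos ha hb)).ne'
    have := beta_pos ha hb
    rw [hpow, beta_add_nat ha hb k]
    field_simp
  · simp

theorem integral_pow_betaMeasure (ha : 0 < a) (hb : 0 < b) (k : ℕ) :
    ∫ x, x ^ k ∂betaMeasure a b = betaMoment a b k := by
  rw [betaMeasure, integral_withDensity_eq_integral_toReal_smul (f := betaPDF a b)
    (measurable_betaPDFReal a b).ennreal_ofReal (ae_of_all _ fun _ => ENNReal.ofReal_lt_top)]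
  have hpdf (x : ℝ) : (betaPDF a b x).toReal = betaPDFReal a b x :=
    ENNReal.toReal_ofReal (betaPDFReal_nonneg ha hb x)
  simp_rw [hpdf, smul_eq_mul, betaPDFReal_mul_pow ha hb k]
  rw [integral_const_mul, integral_betaPDFReal (by positivity) hb, mul_one]

end ProbabilityTheory

theorem betaMeasure_eq_probabilityTheory_betaMeasure (a b : ℝ) :
    _root_.betaMeasure a b = ProbabilityTheory.betaMeasure a b := by
  rw [_root_.betaMeasure, ProbabilityTheory.betaMeasure, ← withDensity_indicator measurableSet_Ioo]
  congr 1
  funext θ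
  by_cases hθ : θ ∈ Ioo (0 : ℝ) 1
  · rw [indicator_of_mem hθ, betaPDF_of_pos_lt_one hθ.1 hθ.2, betaFn, beta]
    ring_nf
  · rw [indicator_of_notMem hθ, betaPDF, betaPDFReal, if_neg (show ¬(0 < θ ∧ θ < 1) from hθ),
      ENNReal.ofReal_zero]

theorem ae_mem_Icc_betaMeasure (a b : ℝ) : ∀ᵐ x ∂_root_.betaMeasure a b, x ∈ Icc (0 : ℝ) 1 :=
  withDensity_absolutelyContinuous _ _ <|
    (ae_restrict_mem measurableSet_Ioo).mono fun _ hx => Ioo_subset_Icc_self hx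

section PolyaUrn

variable {w0 b0 s : ℝ}

theorem polyaW_pos (hw : 0 < w0) (hs : 0 ≤ s) (x : ℕ → Bool) (t : ℕ) : 0 < polyaW w0 s x t := by
  induction t with
  | zero => exact hw
  | succ t ih => rw [polyaW]; split_ifs <;> linarith

theorem polyaB_pos (hb : 0 < b0) (hs : 0 ≤ s) (x : ℕ → Bool) (t : ℕ) : 0 < polyaB b0 s x t := by
  induction t with
  | zero => exact hb
  | succ t ih => rw [polyaB]; split_ifs <;> linarith

theorem polyaW_eq_sum (x : ℕ → Bool) (t : ℕ) :
    polyaW w0 s x t = w0 + s * ∑ i ∈ range t, if x i then 0 else 1 := by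
  induction t with
  | zero => simp [polyaW]
  | succ t ih => rw [polyaW, ih, sum_range_succ]; split_ifs <;> ring

theorem polyaB_eq_sum (x : ℕ → Bool) (t : ℕ) :
    polyaB b0 s x t = b0 + s * ∑ i ∈ range t, if x i then 1 else 0 := by
  induction t with
  | zero => simp [polyaB]
  | succ t ih => rw [polyaB, ih, sum_range_succ]; split_ifs <;> ring

theorem polyaW_congr {x y : ℕ → Bool} {t : ℕ} (h : ∀ i < t, x i = y i) :
    polyaW w0 s x t = polyaW w0 s y t := by
  simp only [polyaW_eq_sum]
  congr 2
  exact sum_congr rfl fun i hi => by rw [h i (mem_range.1 hi)]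

theorem polyaB_congr {x y : ℕ → Bool} {t : ℕ} (h : ∀ i < t, x i = y i) :
    polyaB b0 s x t = polyaB b0 s y t := by
  simp only [polyaB_eq_sum]
  congr 2
  exact sum_congr rfl fun i hi => by rw [h i (mem_range.1 hi)]

theorem polyaJoint_congr {x y : ℕ → Bool} {t : ℕ} (h : ∀ i < t, x i = y i) :
    polyaJoint w0 b0 s x t = polyaJoint w0 b0 s y t := by
  refine prod_congr rfl fun i hi => ?_
  have hlt : ∀ j < i, x j = y j := fun j hj => h j (hj.trans (mem_range.1 hi))
  rw [h i (mem_range.1 hi), polyaW_congr hlt, polyaB_congr hlt]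

theorem polyaJoint_succ (x : ℕ → Bool) (t : ℕ) :
    polyaJoint w0 b0 s x (t + 1) = polyaJoint w0 b0 s x t *
      ((if x t then polyaB b0 s x t else polyaW w0 s x t) /
        (polyaW w0 s x t + polyaB b0 s x t)) :=
  prod_range_succ _ t

theorem polyaJoint_nonneg (hw : 0 < w0) (hb : 0 < b0) (hs : 0 ≤ s) (x : ℕ → Bool) (n : ℕ) :
    0 ≤ polyaJoint w0 b0 s x n := by
  refine prod_nonneg fun t _ => ?_
  have := polyaW_pos hw hs x t
  have := polyaB_pos hb hs x t
  split_ifs <;> positivity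

def extendFalse {t : ℕ} (x : Fin t → Bool) : ℕ → Bool :=
  fun i => if h : i < t then x ⟨i, h⟩ else false

theorem extendFalse_snoc {t : ℕ} (y : Fin t → Bool) (b : Bool) :
    extendFalse (Fin.snoc y b : Fin (t + 1) → Bool) = update (extendFalse y) t b := by
  funext i
  rcases lt_trichotomy i t with hi | rfl | hi
  · simp only [extendFalse, hi, hi.trans (Nat.lt_succ_self t), update_of_ne hi.ne, dif_pos]
    exact Fin.snoc_castSucc (α := fun _ => Bool) b y ⟨i, hi⟩
  · simp only [extendFalse, Nat.lt_succ_self, dif_pos, update_self]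
    exact Fin.snoc_last (α := fun _ => Bool) b y
  · simp [extendFalse, hi.ne', hi.not_gt, (Nat.succ_le_of_lt hi).not_gt]

/-- A function `h W B` of the urn state for which `h W_t B_t` is a martingale. -/
def IsPolyaHarmonic (s : ℝ) (h : ℝ → ℝ → ℝ) : Prop :=
  ∀ W B, 0 < W → 0 < B → B / (W + B) * h W (B + s) + W / (W + B) * h (W + s) B = h W B

theorem sum_bool_polyaJoint_update_mul (hw : 0 < w0) (hb : 0 < b0) (hs : 0 ≤ s)
    {h : ℝ → ℝ → ℝ} (hh : IsPolyaHarmonic s h) (x : ℕ → Bool) (t : ℕ) :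
    ∑ b : Bool, polyaJoint w0 b0 s (update x t b) (t + 1) *
        h (polyaW w0 s (update x t b) (t + 1)) (polyaB b0 s (update x t b) (t + 1)) =
      polyaJoint w0 b0 s x t * h (polyaW w0 s x t) (polyaB b0 s x t) := by
  have hagree (b : Bool) : ∀ i < t, update x t b i = x i := fun i hi => update_of_ne hi.ne _ _
  simp only [Fintype.sum_bool, polyaJoint_succ, polyaW, polyaB, update_self,
    polyaJoint_congr (hagree _), polyaW_congr (hagree _), polyaB_congr (hagree _),
    if_true, if_false, Bool.false_eq_true, add_zero]
  rw [← hh _ _ (polyaW_pos hw hs x t) (polyaB_pos hb hs x t)]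
  ring

theorem sum_polyaJoint_mul_of_isPolyaHarmonic (hw : 0 < w0) (hb : 0 < b0) (hs : 0 ≤ s)
    {h : ℝ → ℝ → ℝ} (hh : IsPolyaHarmonic s h) (t : ℕ) :
    ∑ x : Fin t → Bool, polyaJoint w0 b0 s (extendFalse x) t *
        h (polyaW w0 s (extendFalse x) t) (polyaB b0 s (extendFalse x) t) = h w0 b0 := by
  induction t with
  | zero => simp [polyaJoint, polyaW, polyaB]
  | succ t ih =>
    rw [← ih, ← (Fin.snocEquiv fun _ => Bool).sum_comp, Fintype.sum_prod_type, sum_comm]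
    refine sum_congr rfl fun y _ => ?_
    simp only [Fin.snocEquiv, Equiv.coe_fn_mk, extendFalse_snoc]
    exact sum_bool_polyaJoint_update_mul hw hb hs hh _ t

theorem isPolyaHarmonic_betaMoment (hs : 0 < s) (k : ℕ) :
    IsPolyaHarmonic s fun W B => betaMoment (B / s) (W / s) k := by
  intro W B hW hB
  have hweights : B / (W + B) = (B / s) / (B / s + W / s) ∧
      W / (W + B) = (W / s) / (B / s + W / s) := by
    constructor <;> field_simp <;> ring
  simp only [add_div, div_self hs.ne', hweights.1, hweights.2]
  exact betaMoment_add_one_add_betaMoment_add_one (by positivity) (by positivity) k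

end PolyaUrn

section PolyaProcess

variable {Ω : Type*} {mΩ : MeasurableSpace Ω} {P : Measure Ω} {w0 b0 s : ℝ} {X : ℕ → Ω → ℝ}

noncomputable def drawsUpTo (X : ℕ → Ω → ℝ) (t : ℕ) (ω : Ω) : Fin t → Bool := fun i => X i ω = 1

def urnW (w0 s : ℝ) (X : ℕ → Ω → ℝ) (t : ℕ) (ω : Ω) : ℝ := w0 + s * ∑ i ∈ range t, (1 - X i ω)

def urnB (b0 s : ℝ) (X : ℕ → Ω → ℝ) (t : ℕ) (ω : Ω) : ℝ := b0 + s * ∑ i ∈ range t, X i ω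

theorem measurable_drawsUpTo (hX : ∀ t, StronglyMeasurable (X t)) (t : ℕ) :
    Measurable (drawsUpTo X t) :=
  measurable_pi_lambda _ fun i => measurable_to_bool <| by
    convert (hX i).measurable (measurableSet_singleton 1)
    ext ω
    simp [drawsUpTo]

theorem drawsUpTo_eq_iff (hval : ∀ t ω, X t ω = 0 ∨ X t ω = 1) {t : ℕ} {ω : Ω}
    {x : Fin t → Bool} :
    drawsUpTo X t ω = x ↔ ∀ i < t, X i ω = if extendFalse x i then 1 else 0 := by
  constructor
  · rintro rfl i hi
    rcases hval i ω with h | h <;> simp [extendFalse, drawsUpTo, hi, h]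
  · intro h
    funext i
    have hi := h i i.isLt
    simp only [extendFalse, i.isLt, dif_pos] at hi
    cases hx : x i <;> simp_all [drawsUpTo]

theorem measure_drawsUpTo_preimage (hval : ∀ t ω, X t ω = 0 ∨ X t ω = 1)
    (hlaw : ∀ (n : ℕ) (x : ℕ → Bool),
      P {ω | ∀ t < n, X t ω = if x t then 1 else 0} = ENNReal.ofReal (polyaJoint w0 b0 s x n))
    {t : ℕ} (x : Fin t → Bool) :
    P (drawsUpTo X t ⁻¹' {x}) = ENNReal.ofReal (polyaJoint w0 b0 s (extendFalse x) t) := by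
  rw [← hlaw]
  congr 1
  ext ω
  exact drawsUpTo_eq_iff hval

theorem integral_comp_drawsUpTo [IsFiniteMeasure P] (hw : 0 < w0) (hb : 0 < b0) (hs : 0 ≤ s)
    (hX : ∀ t, StronglyMeasurable (X t)) (hval : ∀ t ω, X t ω = 0 ∨ X t ω = 1)
    (hlaw : ∀ (n : ℕ) (x : ℕ → Bool),
      P {ω | ∀ t < n, X t ω = if x t then 1 else 0} = ENNReal.ofReal (polyaJoint w0 b0 s x n))
    {t : ℕ} (F : (Fin t → Bool) → ℝ) :
    ∫ ω, F (drawsUpTo X t ω) ∂P = ∑ x, polyaJoint w0 b0 s (extendFalse x) t * F x := by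
  have hmeas := measurable_drawsUpTo hX t
  rw [← integral_map hmeas.aemeasurable .of_discrete, integral_fintype .of_finite]
  refine sum_congr rfl fun x _ => ?_
  rw [map_measureReal_apply hmeas (measurableSet_singleton x), measureReal_def,
    measure_drawsUpTo_preimage hval hlaw, ENNReal.toReal_ofReal (polyaJoint_nonneg hw hb hs _ _),
    smul_eq_mul]

theorem polyaW_extendFalse_drawsUpTo (hval : ∀ t ω, X t ω = 0 ∨ X t ω = 1) (t : ℕ) (ω : Ω) :
    polyaW w0 s (extendFalse (drawsUpTo X t ω)) t = urnW w0 s X t ω := by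
  rw [polyaW_eq_sum, urnW]
  congr 2
  refine sum_congr rfl fun i hi => ?_
  rcases hval i ω with h | h <;> simp [extendFalse, drawsUpTo, mem_range.1 hi, h]

theorem polyaB_extendFalse_drawsUpTo (hval : ∀ t ω, X t ω = 0 ∨ X t ω = 1) (t : ℕ) (ω : Ω) :
    polyaB b0 s (extendFalse (drawsUpTo X t ω)) t = urnB b0 s X t ω := by
  rw [polyaB_eq_sum, urnB]
  congr 2
  refine sum_congr rfl fun i hi => ?_
  rcases hval i ω with h | h <;> simp [extendFalse, drawsUpTo, mem_range.1 hi, h]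

theorem integral_urn_of_isPolyaHarmonic [IsFiniteMeasure P] (hw : 0 < w0) (hb : 0 < b0)
    (hs : 0 ≤ s) (hX : ∀ t, StronglyMeasurable (X t)) (hval : ∀ t ω, X t ω = 0 ∨ X t ω = 1)
    (hlaw : ∀ (n : ℕ) (x : ℕ → Bool),
      P {ω | ∀ t < n, X t ω = if x t then 1 else 0} = ENNReal.ofReal (polyaJoint w0 b0 s x n))
    {h : ℝ → ℝ → ℝ} (hh : IsPolyaHarmonic s h) (t : ℕ) :
    ∫ ω, h (urnW w0 s X t ω) (urnB b0 s X t ω) ∂P = h w0 b0 := by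
  simp_rw [← polyaW_extendFalse_drawsUpTo hval, ← polyaB_extendFalse_drawsUpTo hval]
  rw [integral_comp_drawsUpTo hw hb hs hX hval hlaw
    fun x => h (polyaW w0 s (extendFalse x) t) (polyaB b0 s (extendFalse x) t)]
  exact sum_polyaJoint_mul_of_isPolyaHarmonic hw hb hs hh t

theorem urnW_add_urnB (t : ℕ) (ω : Ω) :
    urnW w0 s X t ω + urnB b0 s X t ω = w0 + b0 + s * t := by
  simp only [urnW, urnB, sum_sub_distrib, sum_const, card_range, nsmul_eq_mul, mul_one]
  ring

theorem urnW_nonneg (hw : 0 ≤ w0) (hs : 0 ≤ s) (hval : ∀ t ω, X t ω = 0 ∨ X t ω = 1)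
    (t : ℕ) (ω : Ω) : 0 ≤ urnW w0 s X t ω :=
  add_nonneg hw <| mul_nonneg hs <| sum_nonneg fun i _ => by rcases hval i ω with h | h <;> simp [h]

theorem urnB_nonneg (hb : 0 ≤ b0) (hs : 0 ≤ s) (hval : ∀ t ω, X t ω = 0 ∨ X t ω = 1)
    (t : ℕ) (ω : Ω) : 0 ≤ urnB b0 s X t ω :=
  add_nonneg hb <| mul_nonneg hs <| sum_nonneg fun i _ => by rcases hval i ω with h | h <;> simp [h]

theorem ae_mem_Icc_of_tendsto (hw : 0 ≤ w0) (hb : 0 ≤ b0) (hs : 0 ≤ s)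
    (hval : ∀ t ω, X t ω = 0 ∨ X t ω = 1) {Θ : Ω → ℝ}
    (hΘ : ∀ᵐ ω ∂P, Tendsto (fun t => urnB b0 s X t ω / (urnW w0 s X t ω + urnB b0 s X t ω))
      atTop (𝓝 (Θ ω))) :
    ∀ᵐ ω ∂P, Θ ω ∈ Icc (0 : ℝ) 1 := by
  filter_upwards [hΘ] with ω hω
  refine isClosed_Icc.mem_of_tendsto hω (Eventually.of_forall fun t => ?_)
  have hW := urnW_nonneg hw hs hval t ω
  have hB := urnB_nonneg hb hs hval t ω
  exact ⟨by positivity, div_le_one_of_le₀ (by linarith) (by positivity)⟩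

theorem integral_pow_of_tendsto [IsFiniteMeasure P] (hw : 0 < w0) (hb : 0 < b0) (hs : 0 < s)
    (hX : ∀ t, StronglyMeasurable (X t)) (hval : ∀ t ω, X t ω = 0 ∨ X t ω = 1)
    (hlaw : ∀ (n : ℕ) (x : ℕ → Bool),
      P {ω | ∀ t < n, X t ω = if x t then 1 else 0} = ENNReal.ofReal (polyaJoint w0 b0 s x n))
    {Θ : Ω → ℝ}
    (hΘ : ∀ᵐ ω ∂P, Tendsto (fun t => urnB b0 s X t ω / (urnW w0 s X t ω + urnB b0 s X t ω))
      atTop (𝓝 (Θ ω))) (k : ℕ) :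
    ∫ ω, Θ ω ^ k ∂P = betaMoment (b0 / s) (w0 / s) k := by
  set M : ℕ → Ω → ℝ := fun t ω => betaMoment (urnB b0 s X t ω / s) (urnW w0 s X t ω / s) k
  have hM_int (t : ℕ) : ∫ ω, M t ω ∂P = betaMoment (b0 / s) (w0 / s) k :=
    integral_urn_of_isPolyaHarmonic hw hb hs.le hX hval hlaw (isPolyaHarmonic_betaMoment hs k) t
  have hM_meas (t : ℕ) : AEStronglyMeasurable (M t) P := by
    have hM : M t = (fun x => betaMoment (polyaB b0 s (extendFalse x) t / s)
        (polyaW w0 s (extendFalse x) t / s) k) ∘ drawsUpTo X t := by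
      funext ω
      simp only [M, comp_apply, polyaW_extendFalse_drawsUpTo hval,
        polyaB_extendFalse_drawsUpTo hval]
    rw [hM]
    exact ((measurable_of_finite _).comp (measurable_drawsUpTo hX t)).aestronglyMeasurable
  have hM_bound (t : ℕ) : ∀ᵐ ω ∂P, ‖M t ω‖ ≤ 1 := .of_forall fun ω => by
    have hW := urnW_nonneg hw.le hs.le hval t ω
    have hB := urnB_nonneg hb.le hs.le hval t ω
    rw [Real.norm_of_nonneg (betaMoment_nonneg (by positivity) (by positivity) k)]
    exact betaMoment_le_one (by positivity) (by positivity) k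
  have hM_lim : ∀ᵐ ω ∂P, Tendsto (M · ω) atTop (𝓝 (Θ ω ^ k)) := by
    filter_upwards [hΘ] with ω hω
    have htotal (t : ℕ) : urnB b0 s X t ω / s + urnW w0 s X t ω / s = (w0 + b0) / s + t := by
      rw [← add_div, add_comm, urnW_add_urnB]
      field_simp
    refine tendsto_betaMoment (hω.congr fun t => ?_) ?_ k
    · rw [← add_div, div_div_div_cancel_right₀ hs.ne', add_comm]
    · simp_rw [htotal]
      exact tendsto_atTop_add_const_left _ _ tendsto_natCast_atTop_atTop
  have hlim :=
    tendsto_integral_of_dominated_convergence 1 hM_meas (integrable_const 1) hM_bound hM_lim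
  simp_rw [hM_int] at hlim
  exact tendsto_nhds_unique hlim tendsto_const_nhds

end PolyaProcess

/-- For a Pólya urn process, the almost-sure limit `Θ` of the proportion of
black balls `Z_t = b_t/(w_t + b_t)` has the `Beta(b₀/s, w₀/s)` distribution. -/
theorem polya_limit_is_beta
    {Ω : Type*} {mΩ : MeasurableSpace Ω} {P : Measure Ω} [IsProbabilityMeasure P]
    (w0 b0 s : ℝ) (hw : 0 < w0) (hb : 0 < b0) (hs : 0 < s)
    (X : ℕ → Ω → ℝ) (hX : ∀ t, StronglyMeasurable (X t))
    (hval : ∀ t ω, X t ω = 0 ∨ X t ω = 1)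
    (hlaw : ∀ (n : ℕ) (x : ℕ → Bool),
      P {ω | ∀ t < n, X t ω = if x t then 1 else 0} =
        ENNReal.ofReal (polyaJoint w0 b0 s x n))
    (Θ : Ω → ℝ) (hΘmeas : Measurable Θ)
    (hΘ : ∀ᵐ ω ∂P,
      Filter.Tendsto
        (fun t =>
          (b0 + s * ∑ i ∈ range t, X i ω) /
            ((w0 + s * ∑ i ∈ range t, (1 - X i ω)) +
              (b0 + s * ∑ i ∈ range t, X i ω)))
        Filter.atTop (nhds (Θ ω))) :
    Measure.map Θ P = _root_.betaMeasure (b0 / s) (w0 / s) := by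
  have ha : 0 < b0 / s := div_pos hb hs
  have hb' : 0 < w0 / s := div_pos hw hs
  have := Measure.isProbabilityMeasure_map (μ := P) hΘmeas.aemeasurable
  have : IsProbabilityMeasure (_root_.betaMeasure (b0 / s) (w0 / s)) :=
    betaMeasure_eq_probabilityTheory_betaMeasure _ _ ▸ isProbabilityMeasureBeta ha hb'
  refine Measure.ext_of_moments_of_ae_mem_Icc ?_ (ae_mem_Icc_betaMeasure _ _) fun k => ?_
  · exact (ae_map_iff hΘmeas.aemeasurable measurableSet_Icc).2
      (ae_mem_Icc_of_tendsto hw.le hb.le hs.le hval hΘ)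
  · rw [integral_map hΘmeas.aemeasurable (by fun_prop),
      integral_pow_of_tendsto hw hb hs hX hval hlaw hΘ k,
      betaMeasure_eq_probabilityTheory_betaMeasure, integral_pow_betaMeasure ha hb']
end

section
/- (Proposition 1, survival part) In the reinforced urn process, after observing the first m systems, the predictive probability that the (m+1)-th system survives beyond state r is P(ξ_{m+1} > r | ξ_1,…,ξ_m) = ∏_{j=0}^{r} (w_j + s f_j)/(w_j + s f_j + b_j + s d_j), where f_l = #{p ≤ m : ξ_p > l} and d_l = #{p ≤ m : ξ_p = l}. -/
open Finset

/-- Probability that a single system, facing urns whose current compositions are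
`(W j white, B j black)` for each state `j`, draws white at states `0, …, r-1`
(moving up one state after each white ball) and then black at state `r`,
i.e. that its 0-block ends at state `r`. Within one block every urn is sampled
at most once, so no reinforcement occurs inside the block. -/
noncomputable def blockProb (W B : ℕ → ℝ) (r : ℕ) : ℝ :=
  (B r / (W r + B r)) * ∏ j ∈ range r, W j / (W j + B j)

/-- Updated white compositions after observing a system that failed at state `r`:
each urn `j < r` delivered a white ball and receives `s` extra white balls. -/
noncomputable def updW (s : ℝ) (W : ℕ → ℝ) (r : ℕ) : ℕ → ℝ :=
  fun j => if j < r then W j + s else W j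

/-- Updated black compositions after observing a system that failed at state `r`:
urn `r` delivered a black ball and receives `s` extra black balls. -/
noncomputable def updB (s : ℝ) (B : ℕ → ℝ) (r : ℕ) : ℕ → ℝ :=
  fun j => if j = r then B j + s else B j

/-- Joint probability that the successive systems of the reinforced urn process
fail at the states listed in `a` : the first system fails at `a.head`, then the
urns are Pólya-reinforced, the second system fails at the next entry, etc. -/
noncomputable def jointXi (s : ℝ) (W B : ℕ → ℝ) : List ℕ → ℝ
  | [] => 1
  | r :: a => blockProb W B r * jointXi s (updW s W r) (updB s B r) a

/-! The joint law factorises along the observed systems: after `a`, the urn at `j` has received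
`s` white balls from every system that passed `j` and `s` black balls from every system that
failed at `j`. Hence the predictive law of the next failure state is `blockProb` for these
updated compositions, and its distribution function telescopes to
`1 - ∏_{j ≤ r} W j / (W j + B j)`. -/

lemma blockProb_pos {W B : ℕ → ℝ} (hW : ∀ j, 0 < W j) (hB : ∀ j, 0 < B j) (r : ℕ) :
    0 < blockProb W B r :=
  mul_pos (div_pos (hB r) (add_pos (hW r) (hB r)))
    (prod_pos fun j _ => div_pos (hW j) (add_pos (hW j) (hB j)))

lemma jointXi_pos {s : ℝ} (hs : 0 ≤ s) (a : List ℕ) :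
    ∀ {W B : ℕ → ℝ}, (∀ j, 0 < W j) → (∀ j, 0 < B j) → 0 < jointXi s W B a := by
  induction a with
  | nil => intro W B _ _; exact one_pos
  | cons r a ih =>
    intro W B hW hB
    refine mul_pos (blockProb_pos hW hB r) (ih (fun j => ?_) (fun j => ?_))
    · unfold updW; split_ifs <;> linarith [hW j]
    · unfold updB; split_ifs <;> linarith [hB j]

lemma jointXi_append_singleton (s : ℝ) (a : List ℕ) : ∀ (W B : ℕ → ℝ) (r : ℕ),
    jointXi s W B (a ++ [r]) = jointXi s W B a *
      blockProb (fun j => W j + s * a.countP (j < ·)) (fun j => B j + s * a.count j) r := by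
  induction a with
  | nil => intro W B r; simp [jointXi]
  | cons r₀ a ih =>
    intro W B r
    have hW : (fun j => updW s W r₀ j + s * a.countP (j < ·)) =
        fun j => W j + s * (r₀ :: a).countP (j < ·) := by
      funext j
      by_cases h : j < r₀
      · simp [updW, h]; ring
      · simp [updW, h]
    have hB : (fun j => updB s B r₀ j + s * a.count j) =
        fun j => B j + s * (r₀ :: a).count j := by
      funext j
      by_cases h : j = r₀
      · simp [updB, h]; ring
      · simp [updB, h, Ne.symm h]
    rw [List.cons_append, jointXi, jointXi, ih, hW, hB, mul_assoc]

lemma blockProb_eq_sub {W B : ℕ → ℝ} {r : ℕ} (h : W r + B r ≠ 0) :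
    blockProb W B r =
      ∏ j ∈ range r, W j / (W j + B j) - ∏ j ∈ range (r + 1), W j / (W j + B j) := by
  have hB : B r / (W r + B r) = 1 - W r / (W r + B r) := by field_simp; ring
  rw [prod_range_succ, blockProb, hB]
  ring

lemma sum_range_blockProb {W B : ℕ → ℝ} (h : ∀ j, W j + B j ≠ 0) (r : ℕ) :
    ∑ r' ∈ range (r + 1), blockProb W B r' = 1 - ∏ j ∈ range (r + 1), W j / (W j + B j) := by
  simp_rw [blockProb_eq_sub (h _)]
  rw [sum_range_sub', prod_range_zero]

theorem rup_predictive_survival_general (w b : ℕ → ℝ) (s : ℝ)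
    (hw : ∀ j, 0 < w j) (hb : ∀ j, 0 < b j) (hs : 0 < s)
    (a : List ℕ) (r : ℕ)
    (f d : ℕ → ℕ)
    (hf : ∀ l, f l = a.countP fun p => l < p)
    (hd : ∀ l, d l = a.count l) :
    1 - (∑ r' ∈ range (r + 1), jointXi s w b (a ++ [r'])) / jointXi s w b a =
      ∏ j ∈ range (r + 1), (w j + s * f j) / (w j + s * f j + (b j + s * d j)) := by
  have hja : jointXi s w b a ≠ 0 := (jointXi_pos hs.le a hw hb).ne'
  have hden : ∀ j, w j + s * f j + (b j + s * d j) ≠ 0 := fun j => by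
    have := hw j; have := hb j; positivity
  simp_rw [jointXi_append_singleton, ← mul_sum, mul_div_cancel_left₀ _ hja, ← hf, ← hd]
  rw [sum_range_blockProb hden, sub_sub_cancel]

/-- Proposition 1 (survival part): after observing `m` systems failing at the
states listed in `a`, the predictive probability that the next system survives
beyond state `r` is
`P(ξ_{m+1} > r | ξ₁,…,ξ_m) = ∏_{j=0}^r (w_j + s f_j)/(w_j + s f_j + b_j + s d_j)`,
where `f_l` counts the observed systems surviving past `l` and `d_l` those
failing at `l`. (Since `ξ_{m+1}` is finite almost surely, the conditional
survival probability is `1 - ∑_{r'≤r} P(ξ_{m+1} = r' | ξ₁,…,ξ_m)`.) -/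
theorem rup_predictive_survival (w b : ℕ → ℝ) (s : ℝ)
    (hw : ∀ j, 0 < w j) (hb : ∀ j, 0 < b j) (hs : 0 < s)
    (hrec : Filter.Tendsto (fun n => ∏ j ∈ range (n + 1), w j / (w j + b j))
      Filter.atTop (nhds 0))
    (a : List ℕ) (r : ℕ)
    (f d : ℕ → ℕ)
    (hf : ∀ l, f l = a.countP fun p => l < p)
    (hd : ∀ l, d l = a.count l) :
    1 - (∑ r' ∈ range (r + 1), jointXi s w b (a ++ [r'])) / jointXi s w b a =
      ∏ j ∈ range (r + 1), (w j + s * f j) / (w j + s * f j + (b j + s * d j)) :=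
  rup_predictive_survival_general w b s hw hb hs a r f d hf hd
end

section
/- (Proposition 2, mixture form) In the reinforced urn process, the failure states are conditionally i.i.d. with a beta-Stacy random hazard: for every m and all a_1,…,a_m ≥ 0, P(ξ_1 = a_1,…,ξ_m = a_m) = E[∏_{p=1}^m (Y_{a_p} ∏_{j=0}^{a_p - 1}(1 - Y_j))], where (Y_j)_{j≥0} are independent random variables with Y_j ~ Beta(b_j/s, w_j/s). -/
open Finset

open MeasureTheory ProbabilityTheory

/-! Both sides factor over the states `j < N`, for `N` beyond every entry of `a`. Let `D_j` and
`C_j` count the blocks of `a` that end at `j`, resp. pass through `j`. Each draw from the Pólya urn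
at `j` multiplies `B(b_j/s + ·, w_j/s + ·)` by the current proportion of the colour drawn, so `j`
contributes `B(b_j/s + D_j, w_j/s + C_j) / B(b_j/s, w_j/s)` to `jointXi s w b a`. On the other
side the integrand is the monomial `∏_j Y_j ^ D_j (1 - Y_j) ^ C_j`, and by independence its
expectation is the product of the Beta moments, which are the same ratios. -/

section BetaFunction

open Real

lemma betaFn_pos {x y : ℝ} (hx : 0 < x) (hy : 0 < y) : 0 < betaFn x y :=
  ProbabilityTheory.beta_pos hx hy

lemma betaFn_add_one_left {x y : ℝ} (hx : 0 < x) (hy : 0 < y) :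
    betaFn (x + 1) y = x / (x + y) * betaFn x y := by
  have hxy : 0 < x + y := add_pos hx hy
  rw [betaFn, betaFn, Gamma_add_one hx.ne', show x + 1 + y = (x + y) + 1 by ring,
    Gamma_add_one hxy.ne']
  have := (Gamma_pos_of_pos hxy).ne'
  field_simp

lemma betaFn_add_one_right {x y : ℝ} (hx : 0 < x) (hy : 0 < y) :
    betaFn x (y + 1) = y / (x + y) * betaFn x y := by
  rw [betaFn, mul_comm (Gamma x), add_comm x, ← betaFn, betaFn_add_one_left hy hx, betaFn,
    betaFn, mul_comm (Gamma y), add_comm y]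

lemma setIntegral_Ioo_rpow_mul_one_sub_rpow {x y : ℝ} (hx : 0 < x) (hy : 0 < y) :
    ∫ t in Set.Ioo (0 : ℝ) 1, t ^ (x - 1) * (1 - t) ^ (y - 1) = betaFn x y := by
  have hcomplex : Complex.betaIntegral x y
      = ((∫ t in (0 : ℝ)..1, t ^ (x - 1) * (1 - t) ^ (y - 1) : ℝ) : ℂ) := by
    rw [Complex.betaIntegral, ← intervalIntegral.integral_ofReal]
    refine intervalIntegral.integral_congr fun t ht => ?_
    rw [Set.uIcc_of_le zero_le_one] at ht
    push_cast
    rw [Complex.ofReal_cpow ht.1, Complex.ofReal_cpow (sub_nonneg.2 ht.2)]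
    push_cast
    ring
  rw [show betaFn x y = _ from ProbabilityTheory.beta_eq_betaIntegralReal x y hx hy, hcomplex,
    Complex.ofReal_re, intervalIntegral.integral_of_le zero_le_one, integral_Ioc_eq_integral_Ioo]

lemma integral_pow_mul_one_sub_pow_betaMeasure {α β : ℝ} (hα : 0 < α) (hβ : 0 < β) (k l : ℕ) :
    ∫ θ, θ ^ k * (1 - θ) ^ l ∂(_root_.betaMeasure α β)
      = betaFn (α + k) (β + l) / betaFn α β := by
  rw [_root_.betaMeasure, integral_withDensity_eq_integral_toReal_smul (by fun_prop)
    (ae_of_all _ fun _ => ENNReal.ofReal_lt_top)]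
  have hdensity : ∀ θ ∈ Set.Ioo (0 : ℝ) 1,
      (ENNReal.ofReal (θ ^ (α - 1) * (1 - θ) ^ (β - 1) / betaFn α β)).toReal
        • (θ ^ k * (1 - θ) ^ l)
      = θ ^ ((α + k) - 1) * (1 - θ) ^ ((β + l) - 1) / betaFn α β := by
    rintro θ ⟨hθ0, hθ1⟩
    have hθ1' : 0 < 1 - θ := sub_pos.2 hθ1
    rw [ENNReal.toReal_ofReal (by have := betaFn_pos hα hβ; positivity), smul_eq_mul,
      add_sub_right_comm, add_sub_right_comm β, rpow_add hθ0, rpow_add hθ1', rpow_natCast,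
      rpow_natCast]
    ring
  rw [setIntegral_congr_fun measurableSet_Ioo hdensity, integral_div,
    setIntegral_Ioo_rpow_mul_one_sub_rpow (by positivity) (by positivity)]

lemma integral_pow_mul_one_sub_pow_of_map_eq_betaMeasure {Ω : Type*} {mΩ : MeasurableSpace Ω}
    {P : Measure Ω} {X : Ω → ℝ} (hX : AEMeasurable X P) {α β : ℝ} (hα : 0 < α) (hβ : 0 < β)
    (hlaw : P.map X = _root_.betaMeasure α β) (k l : ℕ) :
    ∫ ω, X ω ^ k * (1 - X ω) ^ l ∂P = betaFn (α + k) (β + l) / betaFn α β := by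
  rw [← integral_map (f := fun θ : ℝ => θ ^ k * (1 - θ) ^ l) hX (by fun_prop), hlaw,
    integral_pow_mul_one_sub_pow_betaMeasure hα hβ]

end BetaFunction

lemma prod_range_pow_boole_mul_pow_boole {M : Type*} [CommMonoid M] (y z : ℕ → M)
    {r N : ℕ} (hr : r < N) :
    ∏ j ∈ range N, y j ^ (if r = j then 1 else 0) * z j ^ (if j < r then 1 else 0)
      = y r * ∏ j ∈ range r, z j := by
  rw [prod_mul_distrib, prod_pow_boole, if_pos (mem_range.2 hr),
    ← prod_range_mul_prod_Ico _ hr.le]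
  have hbelow : ∀ j ∈ range r, z j ^ (if j < r then 1 else 0) = z j := fun j hj => by
    simp [mem_range.1 hj]
  have habove : ∀ j ∈ Ico r N, z j ^ (if j < r then 1 else 0) = 1 := fun j hj => by
    simp [(mem_Ico.1 hj).1]
  rw [prod_congr rfl hbelow, prod_congr rfl habove, prod_const_one, mul_one]

lemma List.prod_map_mul_prod_range {M : Type*} [CommMonoid M] (y z : ℕ → M) {N : ℕ} :
    ∀ a : List ℕ, (∀ r ∈ a, r < N) →
      (a.map fun r => y r * ∏ j ∈ Finset.range r, z j).prod
        = ∏ j ∈ Finset.range N, y j ^ a.count j * z j ^ a.countP (j < ·)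
  | [], _ => by simp
  | r :: a, ha => by
    have hr : r < N := ha r List.mem_cons_self
    rw [List.map_cons, List.prod_cons, List.prod_map_mul_prod_range y z a
      fun r' hr' => ha r' (List.mem_cons_of_mem r hr'), ← prod_range_pow_boole_mul_pow_boole y z hr,
      ← prod_mul_distrib]
    refine prod_congr rfl fun j _ => ?_
    simp only [List.count_cons, List.countP_cons, beq_iff_eq, decide_eq_true_eq, pow_add]
    ac_rfl

lemma ProbabilityTheory.iIndepFun.integral_finset_prod_comp {Ω ι 𝕜 : Type*} [RCLike 𝕜]
    {mΩ : MeasurableSpace Ω} {P : Measure Ω} {𝓧 : ι → Type*} {m𝓧 : ∀ i, MeasurableSpace (𝓧 i)}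
    {X : (i : ι) → Ω → 𝓧 i} {f : (i : ι) → 𝓧 i → 𝕜} (hX : iIndepFun X P)
    (mX : ∀ i, AEMeasurable (X i) P) (hf : ∀ i, AEStronglyMeasurable (f i) (P.map (X i)))
    (s : Finset ι) :
    ∫ ω, ∏ i ∈ s, f i (X i ω) ∂P = ∏ i ∈ s, ∫ ω, f i (X i ω) ∂P := by
  simp_rw [← prod_coe_sort s]
  exact (hX.precomp Subtype.val_injective).integral_fun_prod_comp (fun i : s => mX i)
      (fun i => hf i)

section PolyaUrn

variable {s : ℝ} {W B : ℕ → ℝ}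

lemma updW_pos (hs : 0 < s) (hW : ∀ j, 0 < W j) (r j : ℕ) : 0 < updW s W r j := by
  unfold updW
  split_ifs <;> linarith [hW j]

lemma updB_pos (hs : 0 < s) (hB : ∀ j, 0 < B j) (r j : ℕ) : 0 < updB s B r j := by
  unfold updB
  split_ifs <;> linarith [hB j]

lemma betaFn_updB_updW (hs : 0 < s) {j : ℕ} (hW : 0 < W j) (hB : 0 < B j) (r : ℕ) :
    betaFn (updB s B r j / s) (updW s W r j / s)
      = (B j / (W j + B j)) ^ (if r = j then 1 else 0)
        * (W j / (W j + B j)) ^ (if j < r then 1 else 0) * betaFn (B j / s) (W j / s) := by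
  have hα : 0 < B j / s := div_pos hB hs
  have hβ : 0 < W j / s := div_pos hW hs
  have hscale : ∀ x, x / s / (B j / s + W j / s) = x / (W j + B j) := fun x => by
    field_simp
    ring
  rcases lt_trichotomy j r with hjr | rfl | hrj
  · simp only [updB, updW, hjr.ne, hjr.ne', hjr, if_true, if_false, add_div, div_self hs.ne',
      betaFn_add_one_right hα hβ, hscale]
    ring
  · simp only [updB, updW, lt_irrefl, if_true, if_false, add_div, div_self hs.ne',
      betaFn_add_one_left hα hβ, hscale]
    ring
  · simp only [updB, updW, hrj.ne, hrj.ne', hrj.not_gt, if_false]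
    ring

lemma prod_betaFn_updB_updW (hs : 0 < s) (hW : ∀ j, 0 < W j) (hB : ∀ j, 0 < B j)
    {r N : ℕ} (hr : r < N) :
    ∏ j ∈ range N, betaFn (updB s B r j / s) (updW s W r j / s)
      = blockProb W B r * ∏ j ∈ range N, betaFn (B j / s) (W j / s) := by
  rw [prod_congr rfl fun j _ => betaFn_updB_updW hs (hW j) (hB j) r, prod_mul_distrib,
    prod_range_pow_boole_mul_pow_boole _ _ hr, blockProb]

theorem jointXi_mul_prod_betaFn (hs : 0 < s) {N : ℕ} :
    ∀ (a : List ℕ) {W B : ℕ → ℝ}, (∀ j, 0 < W j) → (∀ j, 0 < B j) → (∀ r ∈ a, r < N) →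
      jointXi s W B a * ∏ j ∈ range N, betaFn (B j / s) (W j / s)
        = ∏ j ∈ range N, betaFn (B j / s + a.count j) (W j / s + a.countP (j < ·))
  | [], W, B, _, _, _ => by simp [jointXi]
  | r :: a, W, B, hW, hB, ha => by
    rw [jointXi, mul_right_comm, ← prod_betaFn_updB_updW hs hW hB (ha r List.mem_cons_self),
      mul_comm, jointXi_mul_prod_betaFn hs a (updW_pos hs hW r) (updB_pos hs hB r)
        fun r' hr' => ha r' (List.mem_cons_of_mem r hr')]
    refine prod_congr rfl fun j _ => ?_
    simp only [updB, updW, List.count_cons, List.countP_cons, beq_iff_eq, decide_eq_true_eq,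
      eq_comm (a := r)]
    congr 1 <;> split_ifs <;> push_cast <;> field_simp <;> ring

end PolyaUrn

theorem rup_beta_stacy_mixture_general (w b : ℕ → ℝ) (s : ℝ)
    (hw : ∀ j, 0 < w j) (hb : ∀ j, 0 < b j) (hs : 0 < s)
    {Ω : Type*} {mΩ : MeasurableSpace Ω} {P : Measure Ω} [IsProbabilityMeasure P]
    (Y : ℕ → Ω → ℝ) (hYmeas : ∀ j, Measurable (Y j))
    (hYindep : iIndepFun Y P)
    (hYlaw : ∀ j, Measure.map (Y j) P = _root_.betaMeasure (b j / s) (w j / s)) :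
    ∀ a : List ℕ,
      jointXi s w b a =
        ∫ ω, (a.map fun r => Y r ω * ∏ j ∈ range r, (1 - Y j ω)).prod ∂P := by
  intro a
  obtain ⟨N, ha⟩ : ∃ N, ∀ r ∈ a, r < N :=
    ⟨a.sum + 1, fun r hr => Nat.lt_succ_of_le (List.le_sum_of_mem hr)⟩
  have hnorm : ∏ j ∈ range N, betaFn (b j / s) (w j / s) ≠ 0 :=
    prod_ne_zero_iff.2 fun j _ => (betaFn_pos (div_pos (hb j) hs) (div_pos (hw j) hs)).ne'
  calc jointXi s w b a
      = (∏ j ∈ range N, betaFn (b j / s + a.count j) (w j / s + a.countP (j < ·)))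
          / ∏ j ∈ range N, betaFn (b j / s) (w j / s) :=
        eq_div_of_mul_eq hnorm (jointXi_mul_prod_betaFn hs a hw hb ha)
    _ = ∏ j ∈ range N, ∫ ω, Y j ω ^ a.count j * (1 - Y j ω) ^ a.countP (j < ·) ∂P := by
        rw [← prod_div_distrib]
        exact prod_congr rfl fun j _ => (integral_pow_mul_one_sub_pow_of_map_eq_betaMeasure
          (hYmeas j).aemeasurable (div_pos (hb j) hs) (div_pos (hw j) hs) (hYlaw j) _ _).symm
    _ = ∫ ω, ∏ j ∈ range N, Y j ω ^ a.count j * (1 - Y j ω) ^ a.countP (j < ·) ∂P :=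
        (hYindep.integral_finset_prod_comp
          (f := fun j θ => θ ^ a.count j * (1 - θ) ^ a.countP (j < ·))
          (fun j => (hYmeas j).aemeasurable) (fun j => by fun_prop) _).symm
    _ = ∫ ω, (a.map fun r => Y r ω * ∏ j ∈ range r, (1 - Y j ω)).prod ∂P := by
        simp only [List.prod_map_mul_prod_range _ _ a ha]

/-- Proposition 2 (mixture form): the failure states of the reinforced urn
process are conditionally i.i.d. with beta-Stacy random hazards: for every
finite sequence of states `a`,
`P(ξ₁ = a₁,…,ξ_m = a_m) = E[∏_p Y_{a_p} ∏_{j<a_p} (1 - Y_j)]`,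
where `(Y_j)` are independent with `Y_j ~ Beta(b_j/s, w_j/s)`. -/
theorem rup_beta_stacy_mixture (w b : ℕ → ℝ) (s : ℝ)
    (hw : ∀ j, 0 < w j) (hb : ∀ j, 0 < b j) (hs : 0 < s)
    (hrec : Filter.Tendsto (fun n => ∏ j ∈ range (n + 1), w j / (w j + b j))
      Filter.atTop (nhds 0))
    {Ω : Type*} {mΩ : MeasurableSpace Ω} {P : Measure Ω} [IsProbabilityMeasure P]
    (Y : ℕ → Ω → ℝ) (hYmeas : ∀ j, Measurable (Y j))
    (hYindep : iIndepFun Y P)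
    (hYlaw : ∀ j, Measure.map (Y j) P = _root_.betaMeasure (b j / s) (w j / s)) :
    ∀ a : List ℕ,
      jointXi s w b a =
        ∫ ω, (a.map fun r => Y r ω * ∏ j ∈ range r, (1 - Y j ω)).prod ∂P :=
  rup_beta_stacy_mixture_general w b s hw hb hs (mΩ := mΩ) Y hYmeas hYindep hYlaw
end
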